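/- arXiv:2208.06177 — 7 statements merged into one kernel-verified Lean document; each statement's English description precedes it below -/
import Mathlib

section
/- Let 0 < γ ≤ 1 and 0 < μ ≤ 1 be real numbers with (γ,μ) such that all denominators below are nonzero. If μ ≥ γ·((1−γ) + √((γ+1)² + 4)) / (2(γ+1)), then Δ_ZW2(γ,μ) ≤ Δ_ZW1(γ,μ), where Δ_ZW1(γ,μ) = 2/μ + μ/(γ(μ+γ)) − 1 and Δ_ZW2(γ,μ) = 1/γ + 1/μ − 1 + 2γ²(1−μ)/(μ(γ(1−μ)(γ+μ) + μ²)). -/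
/-- Corollary 1 (first condition): if `μ ≥ γ((1−γ) + √((γ+1)² + 4))/(2(γ+1))`,
then `Δ_ZW2 ≤ Δ_ZW1`. -/
theorem zw2_beats_zw1_mu_condition
    (γ μ : ℝ) (hγ0 : 0 < γ) (hγ1 : γ ≤ 1) (hμ0 : 0 < μ) (hμ1 : μ ≤ 1)
    (hd1 : μ ≠ 0) (hd2 : γ * (μ + γ) ≠ 0) (hd3 : γ ≠ 0)
    (hd4 : μ * (γ * (1 - μ) * (γ + μ) + μ ^ 2) ≠ 0) (hd5 : 2 * (γ + 1) ≠ 0)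
    (h : μ ≥ γ * ((1 - γ) + Real.sqrt ((γ + 1) ^ 2 + 4)) / (2 * (γ + 1))) :
    1 / γ + 1 / μ - 1 + 2 * γ ^ 2 * (1 - μ) / (μ * (γ * (1 - μ) * (γ + μ) + μ ^ 2))
      ≤ 2 / μ + μ / (γ * (μ + γ)) - 1 := by
  set s := Real.sqrt ((γ + 1) ^ 2 + 4) with hsdef
  have hs2 : s ^ 2 = (γ + 1) ^ 2 + 4 := Real.sq_sqrt (by positivity)
  have hsnn : 0 ≤ s := Real.sqrt_nonneg _
  have h2 : γ * ((1 - γ) + s) ≤ μ * (2 * (γ + 1)) := by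
    rw [ge_iff_le, div_le_iff₀ (by positivity)] at h
    linarith
  -- A := 2(γ+1)μ - γ(1-γ) ≥ γ s ≥ 0, hence A² ≥ γ² s²
  have hA : γ * s ≤ 2 * (γ + 1) * μ - γ * (1 - γ) := by nlinarith
  have hAnn : 0 ≤ γ * s := by positivity
  have hsq : (γ * s) ^ 2 ≤ (2 * (γ + 1) * μ - γ * (1 - γ)) ^ 2 := by
    nlinarith
  have hQ : 0 ≤ (γ + 1) * μ ^ 2 + γ * (γ - 1) * μ - γ ^ 2 := by
    nlinarith [hs2, hsq, hγ0]
  have hD : 0 < γ * (1 - μ) * (γ + μ) + μ ^ 2 := by nlinarith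
  rw [← sub_nonneg]
  have key : 2 / μ + μ / (γ * (μ + γ)) - 1 -
      (1 / γ + 1 / μ - 1 + 2 * γ ^ 2 * (1 - μ) / (μ * (γ * (1 - μ) * (γ + μ) + μ ^ 2)))
      = γ * ((γ + 1) * μ ^ 2 + γ * (γ - 1) * μ - γ ^ 2) /
        (μ * (μ + γ) * (γ * (1 - μ) * (γ + μ) + μ ^ 2)) := by
    field_simp
    ring
  rw [key]
  positivity
end

section
/- Let 0 < γ ≤ 1 and 0 < μ ≤ 1 be real numbers with (γ,μ) such that all denominators below are nonzero. If γ ≤ μ·(−(1−μ) + √((1−μ)(5−μ))) / (2 + (1−μ)), then Δ_ZW2(γ,μ) ≤ Δ_ZW1(γ,μ), where Δ_ZW1(γ,μ) = 2/μ + μ/(γ(μ+γ)) − 1 and Δ_ZW2(γ,μ) = 1/γ + 1/μ − 1 + 2γ²(1−μ)/(μ(γ(1−μ)(γ+μ) + μ²)). -/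
/-- Corollary 1 (second condition): if `γ ≤ μ(−(1−μ) + √((1−μ)(5−μ)))/(2 + (1−μ))`,
then `Δ_ZW2 ≤ Δ_ZW1`. -/
theorem zw2_beats_zw1_gamma_condition
    (γ μ : ℝ) (hγ0 : 0 < γ) (hγ1 : γ ≤ 1) (hμ0 : 0 < μ) (hμ1 : μ ≤ 1)
    (hd1 : μ ≠ 0) (hd2 : γ * (μ + γ) ≠ 0) (hd3 : γ ≠ 0)
    (hd4 : μ * (γ * (1 - μ) * (γ + μ) + μ ^ 2) ≠ 0) (hd5 : (2 : ℝ) + (1 - μ) ≠ 0)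
    (h : γ ≤ μ * (-(1 - μ) + Real.sqrt ((1 - μ) * (5 - μ))) / (2 + (1 - μ))) :
    1 / γ + 1 / μ - 1 + 2 * γ ^ 2 * (1 - μ) / (μ * (γ * (1 - μ) * (γ + μ) + μ ^ 2))
      ≤ 2 / μ + μ / (γ * (μ + γ)) - 1 := by
  set s := Real.sqrt ((1 - μ) * (5 - μ)) with hs
  have hprod : (0:ℝ) ≤ (1 - μ) * (5 - μ) := by nlinarith
  have hs0 : 0 ≤ s := Real.sqrt_nonneg _
  have hs2 : s ^ 2 = (1 - μ) * (5 - μ) := Real.sq_sqrt hprod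
  have hden : (0:ℝ) < 2 + (1 - μ) := by linarith
  have h' : γ * (2 + (1 - μ)) ≤ μ * (-(1 - μ) + s) := by
    rw [div_eq_mul_inv] at h
    calc γ * (2 + (1 - μ)) ≤ (μ * (-(1 - μ) + s) * (2 + (1 - μ))⁻¹) * (2 + (1 - μ)) := by
          apply mul_le_mul_of_nonneg_right h (le_of_lt hden)
      _ = μ * (-(1 - μ) + s) := by field_simp
  -- key: 2(1-μ)γ + (1-μ)μ ≤ μ s
  have ha : 2 * (1 - μ) * γ + (1 - μ) * μ ≤ μ * s := by nlinarith
  have ha0 : 0 ≤ 2 * (1 - μ) * γ + (1 - μ) * μ := by nlinarith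
  have hkey : (1 - μ) * γ ^ 2 + (1 - μ) * μ * γ ≤ μ ^ 2 := by
    rcases eq_or_lt_of_le hμ1 with hμe | hμl
    · rw [← hμe]; nlinarith
    · have hsq : (2 * (1 - μ) * γ + (1 - μ) * μ) ^ 2 ≤ (μ * s) ^ 2 :=
        pow_le_pow_left₀ ha0 ha 2
      nlinarith [hsq, hs2]
  have hD : (0:ℝ) < γ * (1 - μ) * (γ + μ) + μ ^ 2 := by nlinarith
  have hgm : (0:ℝ) < γ * (μ + γ) := by nlinarith
  rw [← sub_nonneg]
  have heq : (2 / μ + μ / (γ * (μ + γ)) - 1)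
      - (1 / γ + 1 / μ - 1 + 2 * γ ^ 2 * (1 - μ) / (μ * (γ * (1 - μ) * (γ + μ) + μ ^ 2)))
      = γ * (μ ^ 2 - ((1 - μ) * γ ^ 2 + (1 - μ) * μ * γ))
        / (μ * (γ + μ) * (γ * (1 - μ) * (γ + μ) + μ ^ 2)) := by
    field_simp
    ring
  rw [heq]
  apply div_nonneg
  · have : 0 ≤ μ ^ 2 - ((1 - μ) * γ ^ 2 + (1 - μ) * μ * γ) := by linarith
    positivity
  · positivity
end

section
/- Let 0 < γ ≤ 1 and 0 < μ ≤ 1 be real numbers. If μ ≥ √2/2, then for every γ ∈ (0,1], Δ_ZW2(γ,μ) ≤ Δ_ZW1(γ,μ), where Δ_ZW1(γ,μ) = 2/μ + μ/(γ(μ+γ)) − 1 and Δ_ZW2(γ,μ) = 1/γ + 1/μ − 1 + 2γ²(1−μ)/(μ(γ(1−μ)(γ+μ) + μ²)). -/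
/-!
`Δ_ZW1 - Δ_ZW2` simplifies to `γ / (μ (μ + γ))` minus the last summand of `Δ_ZW2`, which is
nonnegative exactly when `γ (1 - μ) (γ + μ) ≤ μ²`. The left side is increasing in `γ`, so it is
at most `1 - μ²`, and `1 - μ² ≤ μ²` is the condition `μ ≥ √2/2`.
-/

/-- `Δ_ZW1(γ, μ)` -/
noncomputable def aoiZW1 (γ μ : ℝ) : ℝ := 2 / μ + μ / (γ * (μ + γ)) - 1

/-- `Δ_ZW2(γ, μ)` -/
noncomputable def aoiZW2 (γ μ : ℝ) : ℝ :=
  1 / γ + 1 / μ - 1 + 2 * γ ^ 2 * (1 - μ) / (μ * (γ * (1 - μ) * (γ + μ) + μ ^ 2))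

section

variable {γ μ : ℝ}

theorem aoiZW1_sub_aoiZW2 (hγ : 0 < γ) (hμ : 0 < μ) :
    aoiZW1 γ μ - aoiZW2 γ μ =
      γ / (μ * (μ + γ)) - 2 * γ ^ 2 * (1 - μ) / (μ * (γ * (1 - μ) * (γ + μ) + μ ^ 2)) := by
  unfold aoiZW1 aoiZW2
  field_simp
  ring

theorem aoiZW2_le_aoiZW1_iff (hγ : 0 < γ) (hμ : 0 < μ) (hμ1 : μ ≤ 1) :
    aoiZW2 γ μ ≤ aoiZW1 γ μ ↔ γ * (1 - μ) * (γ + μ) ≤ μ ^ 2 := by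
  have hD : 0 < γ * (1 - μ) * (γ + μ) + μ ^ 2 := by
    have : 0 ≤ γ * (1 - μ) * (γ + μ) := by
      have : 0 ≤ 1 - μ := by linarith
      positivity
    positivity
  rw [← sub_nonneg, aoiZW1_sub_aoiZW2 hγ hμ, sub_nonneg,
    div_le_div_iff₀ (by positivity) (by positivity)]
  have hγμ : 0 < γ * μ := by positivity
  constructor <;> intro h <;> nlinarith

theorem mul_one_sub_mul_add_le_sq (hγ : 0 ≤ γ) (hγ1 : γ ≤ 1) (hμ : 0 ≤ μ) (hμ1 : μ ≤ 1)
    (hμ2 : 1 / 2 ≤ μ ^ 2) : γ * (1 - μ) * (γ + μ) ≤ μ ^ 2 :=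
  calc γ * (1 - μ) * (γ + μ) = (1 - μ) * (γ * (γ + μ)) := by ring
    _ ≤ (1 - μ) * (1 * (1 + μ)) := by gcongr
    _ = 1 - μ ^ 2 := by ring
    _ ≤ μ ^ 2 := by linarith

end

/-- If `μ ≥ √2/2`, then `Δ_ZW2(γ,μ) ≤ Δ_ZW1(γ,μ)` for every `γ ∈ (0,1]`. -/
theorem zw2_beats_zw1_of_large_mu
    (μ : ℝ) (hμ0 : 0 < μ) (hμ1 : μ ≤ 1) (h : μ ≥ Real.sqrt 2 / 2) :
    ∀ γ : ℝ, 0 < γ → γ ≤ 1 →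
      1 / γ + 1 / μ - 1 + 2 * γ ^ 2 * (1 - μ) / (μ * (γ * (1 - μ) * (γ + μ) + μ ^ 2))
        ≤ 2 / μ + μ / (γ * (μ + γ)) - 1 := by
  intro γ hγ hγ1
  have hμ2 : 1 / 2 ≤ μ ^ 2 :=
    calc (1 / 2 : ℝ) = (Real.sqrt 2 / 2) ^ 2 := by norm_num [div_pow]
      _ ≤ μ ^ 2 := by gcongr
  exact (aoiZW2_le_aoiZW1_iff hγ hμ0 hμ1).mpr
    (mul_one_sub_mul_add_le_sq hγ.le hγ1 hμ0.le hμ1 hμ2)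
end

section
/- Let 0 < γ ≤ 1 and 0 < μ < 1 be real numbers and β ≥ 1 an integer. If Δ_ZW1(γ,μ) − Δ_W1(β,γ,μ) ≥ 0, then q(β) + (1−μ)^β·(2β(μ+γ) + 2) ≤ 0, where q(β) = β²(μ² + γμ) + β(μ² + γμ − 2γ) − 2, Δ_ZW1(γ,μ) = 2/μ + μ/(γ(μ+γ)) − 1, and Δ_W1(β,γ,μ) = (βμ(−βγ + γ − 2) − 2(βγ + 1)) / (2(γ((1−μ)^β + βμ) + μ)) + β + 1/γ + 2/μ − 1. -/
/-- If `Δ_ZW1 − Δ_W1(β) ≥ 0`, then `q(β) + (1−μ)^β(2β(μ+γ) + 2) ≤ 0`, where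
`q(β) = β²(μ² + γμ) + β(μ² + γμ − 2γ) − 2`. -/
theorem wait1_better_implies_quadratic_constraint
    (γ μ : ℝ) (hγ0 : 0 < γ) (hγ1 : γ ≤ 1) (hμ0 : 0 < μ) (hμ1 : μ < 1)
    (β : ℕ) (hβ : 1 ≤ β)
    (h : (2 / μ + μ / (γ * (μ + γ)) - 1)
        - (((β : ℝ) * μ * (-(β : ℝ) * γ + γ - 2) - 2 * ((β : ℝ) * γ + 1))
            / (2 * (γ * ((1 - μ) ^ β + (β : ℝ) * μ) + μ))
          + (β : ℝ) + 1 / γ + 2 / μ - 1) ≥ 0) :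
    ((β : ℝ) ^ 2 * (μ ^ 2 + γ * μ) + (β : ℝ) * (μ ^ 2 + γ * μ - 2 * γ) - 2)
      + (1 - μ) ^ β * (2 * (β : ℝ) * (μ + γ) + 2) ≤ 0 := by
  set x : ℝ := (1 - μ) ^ β with hxdef
  have hx : 0 ≤ x := pow_nonneg (by linarith) _
  have hb : (1 : ℝ) ≤ (β : ℝ) := by exact_mod_cast hβ
  have hD : 0 < 2 * (γ * (x + (β : ℝ) * μ) + μ) := by nlinarith [mul_nonneg hγ0.le hx, mul_nonneg hγ0.le (mul_nonneg (le_trans zero_le_one hb) hμ0.le)]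
  have hγμ : 0 < γ * (μ + γ) := by positivity
  set E : ℝ := (2 / μ + μ / (γ * (μ + γ)) - 1)
        - (((β : ℝ) * μ * (-(β : ℝ) * γ + γ - 2) - 2 * ((β : ℝ) * γ + 1))
            / (2 * (γ * (x + (β : ℝ) * μ) + μ))
          + (β : ℝ) + 1 / γ + 2 / μ - 1) with hEdef
  have key : E * (2 * (γ * (x + (β : ℝ) * μ) + μ)) * (γ * (μ + γ))
      = -γ ^ 2 * (((β : ℝ) ^ 2 * (μ ^ 2 + γ * μ) + (β : ℝ) * (μ ^ 2 + γ * μ - 2 * γ) - 2)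
        + x * (2 * (β : ℝ) * (μ + γ) + 2)) := by
    rw [hEdef]
    field_simp
    ring
  have hE : 0 ≤ E := h
  nlinarith [mul_nonneg (mul_nonneg hE hD.le) hγμ.le, sq_nonneg γ, mul_pos hγ0 hγ0]
end

section
/- Let 0 < γ ≤ 1 and 0 < μ < 1 be real numbers and β ≥ 1 an integer, and set a = μ² + γμ. If Δ_W1(β,γ,μ) ≤ Δ_ZW1(γ,μ), then β ≤ (2γ − a + √((a − 2γ)² + 8a)) / (2a), where Δ_ZW1(γ,μ) = 2/μ + μ/(γ(μ+γ)) − 1 and Δ_W1(β,γ,μ) = (βμ(−βγ + γ − 2) − 2(βγ + 1)) / (2(γ((1−μ)^β + βμ) + μ)) + β + 1/γ + 2/μ − 1. In particular, the AoI-optimal threshold β* for the Wait-1 policy satisfies β* ≤ ⌊(2γ + √((μ² + γμ − 2γ)² + 8(μ² + γμ)))/(2(μ² + γμ)) − 1/2⌋. -/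
/-! Clearing the (positive) denominators turns `Δ_W1(β) ≤ Δ_ZW1` into
`γ (a β² + (a − 2γ) β − 2) + 2γ (1 − μ)^β (1 + (μ + γ) β) ≤ 0` with `a = μ² + γμ`. The second
summand is nonnegative, so `β` lies below the larger root of the quadratic `a x² + (a − 2γ) x − 2`.
An optimal threshold does at least as well as `β = 1`, which is the zero-wait policy, and the
floor form of the bound is the same root minus `1/2`. -/

theorem le_quadratic_root_of_nonpos {a b c x : ℝ} (ha : 0 < a) (h : a * x ^ 2 + b * x + c ≤ 0) :
    x ≤ (-b + √(discrim a b c)) / (2 * a) := by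
  have hsq : (2 * a * x + b) ^ 2 ≤ discrim a b c := by
    rw [discrim]
    nlinarith
  rw [le_div_iff₀ (by positivity)]
  linarith [le_abs_self (2 * a * x + b), Real.abs_le_sqrt hsq]

namespace AoI

noncomputable def wait1 (γ μ : ℝ) (β : ℕ) : ℝ :=
  ((β : ℝ) * μ * (-(β : ℝ) * γ + γ - 2) - 2 * ((β : ℝ) * γ + 1))
      / (2 * (γ * ((1 - μ) ^ β + (β : ℝ) * μ) + μ))
    + (β : ℝ) + 1 / γ + 2 / μ - 1

noncomputable def zeroWait (γ μ : ℝ) : ℝ := 2 / μ + μ / (γ * (μ + γ)) - 1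

variable {γ μ : ℝ}

theorem wait1_one (hγ : 0 < γ) (hμ : 0 < μ) : wait1 γ μ 1 = zeroWait γ μ := by
  have : μ + γ ≠ 0 := by positivity
  simp only [wait1, zeroWait, Nat.cast_one, pow_one, one_mul, sub_add_cancel, mul_one]
  field_simp
  ring

theorem wait1_sub_zeroWait (hγ : 0 < γ) (hμ0 : 0 < μ) (hμ1 : μ ≤ 1) (β : ℕ) :
    wait1 γ μ β - zeroWait γ μ
      = γ * ((μ ^ 2 + γ * μ) * β ^ 2 + (μ ^ 2 + γ * μ - 2 * γ) * β - 2
          + 2 * (1 - μ) ^ β * (1 + (μ + γ) * β))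
        / ((μ + γ) * (2 * (γ * ((1 - μ) ^ β + β * μ) + μ))) := by
  have hE : 0 ≤ (1 - μ) ^ β := pow_nonneg (by linarith) β
  have : μ + γ ≠ 0 := by positivity
  simp only [wait1, zeroWait]
  set D := γ * ((1 - μ) ^ β + β * μ) + μ with hD
  have : D ≠ 0 := by positivity
  field_simp
  rw [hD]
  ring

theorem quadratic_nonpos_of_wait1_le_zeroWait (hγ : 0 < γ) (hμ0 : 0 < μ) (hμ1 : μ ≤ 1) {β : ℕ}
    (h : wait1 γ μ β ≤ zeroWait γ μ) :
    (μ ^ 2 + γ * μ) * β ^ 2 + (μ ^ 2 + γ * μ - 2 * γ) * β - 2 ≤ 0 := by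
  have hE : 0 ≤ (1 - μ) ^ β := pow_nonneg (by linarith) β
  have hden : 0 < (μ + γ) * (2 * (γ * ((1 - μ) ^ β + β * μ) + μ)) := by positivity
  have hnum := sub_nonpos.mpr h
  rw [wait1_sub_zeroWait hγ hμ0 hμ1, div_le_iff₀ hden, zero_mul] at hnum
  have : 0 ≤ 2 * (1 - μ) ^ β * (1 + (μ + γ) * β) := by positivity
  linarith [nonpos_of_mul_nonpos_right hnum hγ]

end AoI

open AoI in
theorem wait1_optimal_threshold_bound_general
    (γ μ : ℝ) (hγ0 : 0 < γ) (hμ0 : 0 < μ) (hμ1 : μ < 1)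
    (a : ℝ) (ha : a = μ ^ 2 + γ * μ)
    (ΔW1 : ℕ → ℝ)
    (hΔW1 : ∀ β : ℕ, ΔW1 β
      = ((β : ℝ) * μ * (-(β : ℝ) * γ + γ - 2) - 2 * ((β : ℝ) * γ + 1))
          / (2 * (γ * ((1 - μ) ^ β + (β : ℝ) * μ) + μ))
        + (β : ℝ) + 1 / γ + 2 / μ - 1)
    (ΔZW1 : ℝ) (hΔZW1 : ΔZW1 = 2 / μ + μ / (γ * (μ + γ)) - 1) :
    (∀ β : ℕ, 1 ≤ β → ΔW1 β ≤ ΔZW1 →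
      (β : ℝ) ≤ (2 * γ - a + Real.sqrt ((a - 2 * γ) ^ 2 + 8 * a)) / (2 * a))
    ∧ (∀ βstar : ℕ, 1 ≤ βstar → (∀ β' : ℕ, 1 ≤ β' → ΔW1 βstar ≤ ΔW1 β') →
      (βstar : ℤ) ≤ ⌊(2 * γ + Real.sqrt ((μ ^ 2 + γ * μ - 2 * γ) ^ 2
          + 8 * (μ ^ 2 + γ * μ))) / (2 * (μ ^ 2 + γ * μ)) - 1 / 2⌋) := by
  obtain rfl : ΔW1 = wait1 γ μ := funext hΔW1
  obtain rfl : ΔZW1 = zeroWait γ μ := hΔZW1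
  have ha0 : 0 < a := by rw [ha]; positivity
  have bound : ∀ β : ℕ, wait1 γ μ β ≤ zeroWait γ μ →
      (β : ℝ) ≤ (2 * γ - a + Real.sqrt ((a - 2 * γ) ^ 2 + 8 * a)) / (2 * a) := by
    intro β h
    have hq := quadratic_nonpos_of_wait1_le_zeroWait hγ0 hμ0 hμ1.le h
    rw [← ha] at hq
    have hroot := le_quadratic_root_of_nonpos ha0 hq
    rw [discrim] at hroot
    convert hroot using 4 <;> ring
  refine ⟨fun β _ => bound β, fun βstar _ hopt => ?_⟩
  have hβ := bound βstar (wait1_one hγ0 hμ0 ▸ hopt 1 le_rfl)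
  rw [Int.le_floor, ← ha]
  push_cast
  refine hβ.trans_eq ?_
  field_simp
  ring

/-- Lemma 6: if `Δ_W1(β) ≤ Δ_ZW1`, then `β ≤ (2γ − a + √((a−2γ)² + 8a))/(2a)`
with `a = μ² + γμ`; in particular the AoI-optimal threshold `β*` satisfies
`β* ≤ ⌊(2γ + √((μ²+γμ−2γ)² + 8(μ²+γμ)))/(2(μ²+γμ)) − 1/2⌋`. -/
theorem wait1_optimal_threshold_bound
    (γ μ : ℝ) (hγ0 : 0 < γ) (hγ1 : γ ≤ 1) (hμ0 : 0 < μ) (hμ1 : μ < 1)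
    (a : ℝ) (ha : a = μ ^ 2 + γ * μ)
    (ΔW1 : ℕ → ℝ)
    (hΔW1 : ∀ β : ℕ, ΔW1 β
      = ((β : ℝ) * μ * (-(β : ℝ) * γ + γ - 2) - 2 * ((β : ℝ) * γ + 1))
          / (2 * (γ * ((1 - μ) ^ β + (β : ℝ) * μ) + μ))
        + (β : ℝ) + 1 / γ + 2 / μ - 1)
    (ΔZW1 : ℝ) (hΔZW1 : ΔZW1 = 2 / μ + μ / (γ * (μ + γ)) - 1) :
    (∀ β : ℕ, 1 ≤ β → ΔW1 β ≤ ΔZW1 →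
      (β : ℝ) ≤ (2 * γ - a + Real.sqrt ((a - 2 * γ) ^ 2 + 8 * a)) / (2 * a))
    ∧ (∀ βstar : ℕ, 1 ≤ βstar → (∀ β' : ℕ, 1 ≤ β' → ΔW1 βstar ≤ ΔW1 β') →
      (βstar : ℤ) ≤ ⌊(2 * γ + Real.sqrt ((μ ^ 2 + γ * μ - 2 * γ) ^ 2
          + 8 * (μ ^ 2 + γ * μ))) / (2 * (μ ^ 2 + γ * μ)) - 1 / 2⌋) :=
  wait1_optimal_threshold_bound_general γ μ hγ0 hμ0 hμ1 a ha ΔW1 hΔW1 ΔZW1 hΔZW1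
end

section
/- Let 0 < γ ≤ 1 and 0 < μ < 1 be real numbers. If μ ≤ (−γ + √(γ² + 2γ))/2, or if μ < 1/2 and γ ≥ 2μ²/(1 − 2μ), then there exists an integer β ≥ 2 such that Δ_W1(β,γ,μ) ≤ Δ_ZW1(γ,μ), where Δ_ZW1(γ,μ) = 2/μ + μ/(γ(μ+γ)) − 1 and Δ_W1(β,γ,μ) = (βμ(−βγ + γ − 2) − 2(βγ + 1)) / (2(γ((1−μ)^β + βμ) + μ)) + β + 1/γ + 2/μ − 1. -/
/-- Corollary 2: if `μ ≤ (−γ + √(γ² + 2γ))/2`, or if `μ < 1/2` and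
`γ ≥ 2μ²/(1 − 2μ)`, then some integer threshold `β ≥ 2` makes the Wait-1
policy at least as good as the ZW-1 policy. -/
theorem wait1_waiting_is_beneficial
    (γ μ : ℝ) (hγ0 : 0 < γ) (hγ1 : γ ≤ 1) (hμ0 : 0 < μ) (hμ1 : μ < 1)
    (h : μ ≤ (-γ + Real.sqrt (γ ^ 2 + 2 * γ)) / 2
      ∨ (μ < 1 / 2 ∧ γ ≥ 2 * μ ^ 2 / (1 - 2 * μ))) :
    ∃ β : ℕ, 2 ≤ β ∧
      ((β : ℝ) * μ * (-(β : ℝ) * γ + γ - 2) - 2 * ((β : ℝ) * γ + 1))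
          / (2 * (γ * ((1 - μ) ^ β + (β : ℝ) * μ) + μ))
        + (β : ℝ) + 1 / γ + 2 / μ - 1
      ≤ 2 / μ + μ / (γ * (μ + γ)) - 1 := by
  have key : 2 * μ ^ 2 + 2 * μ * γ ≤ γ := by
    rcases h with h | ⟨hμh, hg⟩
    · have h1 : 2 * μ + γ ≤ Real.sqrt (γ ^ 2 + 2 * γ) := by linarith
      have hs := Real.sq_sqrt (by nlinarith : (0:ℝ) ≤ γ ^ 2 + 2 * γ)
      nlinarith [Real.sqrt_nonneg (γ ^ 2 + 2 * γ)]
    · have h12 : 0 < 1 - 2 * μ := by linarith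
      have := (div_le_iff₀ h12).mp hg
      nlinarith
  refine ⟨2, le_refl 2, ?_⟩
  push_cast
  have h1μ : ((1:ℝ) - μ) ^ 2 + 2 * μ = 1 + μ ^ 2 := by ring
  rw [h1μ]
  have hD : (0:ℝ) < 2 * (γ * (1 + μ ^ 2) + μ) := by nlinarith
  have hγμ : (0:ℝ) < γ * (μ + γ) := by positivity
  rw [← sub_nonneg]
  have heq : 2 / μ + μ / (γ * (μ + γ)) - 1 -
      ((2 * μ * (-2 * γ + γ - 2) - 2 * (2 * γ + 1))
          / (2 * (γ * (1 + μ ^ 2) + μ)) + 2 + 1 / γ + 2 / μ - 1)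
      = (2 * γ ^ 2 * μ * (γ - 2 * μ * γ - 2 * μ ^ 2))
        / ((2 * (γ * (1 + μ ^ 2) + μ)) * (γ * (μ + γ))) := by
    field_simp
    ring
  rw [heq]
  apply div_nonneg _ (by positivity)
  have h0 : 0 ≤ γ - 2 * μ * γ - 2 * μ ^ 2 := by linarith
  nlinarith [mul_nonneg (mul_nonneg (sq_nonneg γ) hμ0.le) h0]
end

section
/- Let 0 < γ ≤ 1 and 0 < μ < 1 be real numbers. If μ > (√3 − 1)/2, then for every integer β ≥ 2, Δ_W1(β,γ,μ) ≥ Δ_ZW1(γ,μ), where Δ_ZW1(γ,μ) = 2/μ + μ/(γ(μ+γ)) − 1 and Δ_W1(β,γ,μ) = (βμ(−βγ + γ − 2) − 2(βγ + 1)) / (2(γ((1−μ)^β + βμ) + μ)) + β + 1/γ + 2/μ − 1. -/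
set_option maxHeartbeats 1000000


/-- If `μ > (√3 − 1)/2`, then no Wait-1 policy with threshold `β ≥ 2` improves
on the ZW-1 policy, regardless of `γ`. -/
theorem wait1_no_gain_for_large_mu
    (γ μ : ℝ) (hγ0 : 0 < γ) (hγ1 : γ ≤ 1) (hμ0 : 0 < μ) (hμ1 : μ < 1)
    (h : μ > (Real.sqrt 3 - 1) / 2) :
    ∀ β : ℕ, 2 ≤ β →
      ((β : ℝ) * μ * (-(β : ℝ) * γ + γ - 2) - 2 * ((β : ℝ) * γ + 1))
          / (2 * (γ * ((1 - μ) ^ β + (β : ℝ) * μ) + μ))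
        + (β : ℝ) + 1 / γ + 2 / μ - 1
      ≥ 2 / μ + μ / (γ * (μ + γ)) - 1 := by
  intro β hβ
  have hb2 : (2:ℝ) ≤ (β:ℝ) := by exact_mod_cast hβ
  have hq : (0:ℝ) < (1 - μ) ^ β := pow_pos (by linarith) β
  have hβμ : (0:ℝ) ≤ (β:ℝ) * μ := mul_nonneg (by linarith) hμ0.le
  have hD : 0 < 2 * (γ * ((1 - μ) ^ β + (β : ℝ) * μ) + μ) := by
    have h1 : 0 < (1 - μ) ^ β + (β : ℝ) * μ := by linarith
    have := mul_pos hγ0 h1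
    linarith
  have hγμ : 0 < μ + γ := by linarith
  have hK : 0 ≤ 2 * μ ^ 2 + 2 * μ - 1 := by
    have h3 : Real.sqrt 3 ^ 2 = 3 := Real.sq_sqrt (by norm_num)
    have h4 : 0 ≤ Real.sqrt 3 := Real.sqrt_nonneg 3
    have h5 : Real.sqrt 3 < 2 * μ + 1 := by linarith
    nlinarith [h3, h4, h5]
  -- key polynomial inequality
  have key : 0 ≤ ((β : ℝ) * μ * (-(β : ℝ) * γ + γ - 2) - 2 * ((β : ℝ) * γ + 1)) * (μ + γ)
      + ((β : ℝ) * (μ + γ) + 1) * (2 * (γ * ((1 - μ) ^ β + (β : ℝ) * μ) + μ)) := by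
    by_cases hb5 : (5:ℝ) ≤ (β:ℝ)
    · have hμ3 : 1/3 < μ := by nlinarith [hK, hμ0]
      have t1 : 0 ≤ γ * (μ + γ) * (β:ℝ) * ((β:ℝ) * μ + μ - 2) := by
        have : 0 ≤ (β:ℝ) * μ + μ - 2 := by nlinarith [hb5, hμ3]
        have h0 : 0 ≤ γ * (μ + γ) * (β:ℝ) :=
          mul_nonneg (mul_nonneg hγ0.le hγμ.le) (by linarith)
        exact mul_nonneg h0 this
      have t2 : 0 ≤ 2 * γ * ((β:ℝ) * μ - 1) := by
        have : 0 ≤ (β:ℝ) * μ - 1 := by nlinarith [hb5, hμ3]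
        have h0 : 0 ≤ 2 * γ := by linarith
        exact mul_nonneg h0 this
      have t3 : 0 ≤ 2 * (β:ℝ) * γ * (1 - μ) ^ β * (μ + γ) := by
        have h0 : 0 ≤ 2 * (β:ℝ) * γ := by positivity
        exact mul_nonneg (mul_nonneg h0 hq.le) hγμ.le
      have t4 : 0 ≤ 2 * γ * (1 - μ) ^ β := by
        have h0 : 0 ≤ 2 * γ := by linarith
        exact mul_nonneg h0 hq.le
      nlinarith [t1, t2, t3, t4]
    · have hβ5 : β < 5 := by
        by_contra hcon
        push_neg at hcon
        exact hb5 (by exact_mod_cast hcon)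
      have h1γ : (0:ℝ) ≤ 1 - γ := by linarith
      interval_cases β
      · -- β = 2 : T' = 4γμ³(1-γ) + 2γ²μ(2μ²+2μ-1)
        have hA : 0 ≤ γ * μ * (1 - γ) * (μ * μ) :=
          mul_nonneg (mul_nonneg (mul_nonneg hγ0.le hμ0.le) h1γ)
            (mul_nonneg hμ0.le hμ0.le)
        have hB : 0 ≤ γ * γ * μ * (2 * μ ^ 2 + 2 * μ - 1) :=
          mul_nonneg (mul_nonneg (mul_nonneg hγ0.le hγ0.le) hμ0.le) hK
        push_cast
        nlinarith [hA, hB]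
      · -- β = 3 : 2γμ(1-γ)μ²(8-3μ) + γ²μ[(2μ²+2μ-1)(8-3μ) + (2-μ)]
        have hA : 0 ≤ γ * μ * (1 - γ) * (μ * μ * (8 - 3 * μ)) :=
          mul_nonneg (mul_nonneg (mul_nonneg hγ0.le hμ0.le) h1γ)
            (mul_nonneg (mul_nonneg hμ0.le hμ0.le) (by linarith))
        have hB : 0 ≤ γ * γ * μ * ((2 * μ ^ 2 + 2 * μ - 1) * (8 - 3 * μ)) :=
          mul_nonneg (mul_nonneg (mul_nonneg hγ0.le hγ0.le) hμ0.le)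
            (mul_nonneg hK (by linarith))
        have hC : 0 ≤ γ * γ * μ * (2 - μ) :=
          mul_nonneg (mul_nonneg (mul_nonneg hγ0.le hγ0.le) hμ0.le) (by linarith)
        push_cast
        nlinarith [hA, hB, hC]
      · -- β = 4
        have hq1 : 0 ≤ 4 * μ ^ 2 - 15 * μ + 20 := by nlinarith [sq_nonneg (8 * μ - 15)]
        have hq2 : 0 ≤ 4 * μ ^ 2 - 15 * μ + 21 := by nlinarith [sq_nonneg (8 * μ - 15)]
        have hA : 0 ≤ γ * μ * (1 - γ) * (μ * μ * (4 * μ ^ 2 - 15 * μ + 20)) :=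
          mul_nonneg (mul_nonneg (mul_nonneg hγ0.le hμ0.le) h1γ)
            (mul_nonneg (mul_nonneg hμ0.le hμ0.le) hq1)
        have hB : 0 ≤ γ * γ * μ * ((2 * μ ^ 2 + 2 * μ - 1) * (4 * μ ^ 2 - 15 * μ + 21)) :=
          mul_nonneg (mul_nonneg (mul_nonneg hγ0.le hγ0.le) hμ0.le)
            (mul_nonneg hK hq2)
        have hC : 0 ≤ γ * γ * μ * (9 * (1 - μ)) :=
          mul_nonneg (mul_nonneg (mul_nonneg hγ0.le hγ0.le) hμ0.le) (by linarith)
        push_cast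
        nlinarith [hA, hB, hC]
  -- assemble
  rw [ge_iff_le, ← sub_nonneg]
  have hrw : (((β : ℝ) * μ * (-(β : ℝ) * γ + γ - 2) - 2 * ((β : ℝ) * γ + 1))
          / (2 * (γ * ((1 - μ) ^ β + (β : ℝ) * μ) + μ))
        + (β : ℝ) + 1 / γ + 2 / μ - 1)
      - (2 / μ + μ / (γ * (μ + γ)) - 1)
      = (((β : ℝ) * μ * (-(β : ℝ) * γ + γ - 2) - 2 * ((β : ℝ) * γ + 1)) * (μ + γ)
          + ((β : ℝ) * (μ + γ) + 1) * (2 * (γ * ((1 - μ) ^ β + (β : ℝ) * μ) + μ)))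
        / ((2 * (γ * ((1 - μ) ^ β + (β : ℝ) * μ) + μ)) * (μ + γ)) := by
    field_simp
    ring
  rw [hrw]
  exact div_nonneg key (mul_nonneg hD.le hγμ.le)
end
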